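/- arXiv:2205.10719 — 4 statements merged into one kernel-verified Lean document; each statement's English description precedes it below -/
import Mathlib

section
/- Each of the six vector fields X₁ = χ sinθ cosφ ∂_r + (χ/r) cosθ cosφ ∂_θ − (χ sinφ/(r sinθ)) ∂_φ, X₂ = χ sinθ sinφ ∂_r + (χ/r) cosθ sinφ ∂_θ + (χ cosφ/(r sinθ)) ∂_φ, X₃ = χ cosθ ∂_r − (χ/r) sinθ ∂_θ, X₄ = sinφ ∂_θ + (cosφ/tanθ) ∂_φ, X₅ = −cosφ ∂_θ + (sinφ/tanθ) ∂_φ, X₆ = ∂_φ (where χ = √(1 − k r²)) satisfies the Killing equation X^α ∂_α g_{μν} + g_{αν} ∂_μ X^α + g_{μα} ∂_ν X^α = 0 at every point of U, for the Robertson–Walker metric g = diag(−1, a(t)²/(1 − k r²), a(t)² r², a(t)² r² sin²θ) in coordinates (t,r,θ,φ). -/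
/-!
Points are `x : Fin 4 → ℝ` with `t = x 0`, `r = x 1`, `θ = x 2`, `φ = x 3`.

Since the metric is diagonal, the Killing equation reduces to
`δ_{μν} X(g_μμ) + g_νν ∂_μ X^ν + g_μμ ∂_ν X^μ = 0`. Every metric coefficient and every component
of every `X_i` is a product of functions of one coordinate each, so all partial derivatives follow
from the product rule together with `χ' = -k r / χ` and `(χ / r)' = -1 / (r² χ)`. After eliminating
`k` through `k r² = 1 - χ²`, each component of the Killing equation becomes a rational identity in
`χ, r, a, a', sin, cos`.
-/

open Real
open scoped ContDiff

noncomputable section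

/-- Partial derivative in the μ-th coordinate direction. -/
def pd (μ : Fin 4) (f : (Fin 4 → ℝ) → ℝ) (x : Fin 4 → ℝ) : ℝ :=
  fderiv ℝ f x (Pi.single μ 1)

/-- χ = √(1 − k r²). -/
def chi (k : ℝ) (x : Fin 4 → ℝ) : ℝ := Real.sqrt (1 - k * (x 1) ^ 2)

/-- The Robertson–Walker metric g = diag(−1, a²/(1−kr²), a² r², a² r² sin²θ). -/
def gRW (k : ℝ) (a : ℝ → ℝ) (x : Fin 4 → ℝ) : Matrix (Fin 4) (Fin 4) ℝ :=
  Matrix.diagonal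
    ![-1, (a (x 0)) ^ 2 / (1 - k * (x 1) ^ 2),
      (a (x 0)) ^ 2 * (x 1) ^ 2,
      (a (x 0)) ^ 2 * (x 1) ^ 2 * (Real.sin (x 2)) ^ 2]

/-- The six vector fields X₁, X₂, X₃, X₄ = X_x, X₅ = X_y, X₆ = X_z,
given by their components (X^t, X^r, X^θ, X^φ). -/
def KV (k : ℝ) : Fin 6 → (Fin 4 → ℝ) → (Fin 4 → ℝ) :=
  ![fun x => ![0, chi k x * Real.sin (x 2) * Real.cos (x 3),
      (chi k x / (x 1)) * Real.cos (x 2) * Real.cos (x 3),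
      -((chi k x * Real.sin (x 3)) / ((x 1) * Real.sin (x 2)))],
    fun x => ![0, chi k x * Real.sin (x 2) * Real.sin (x 3),
      (chi k x / (x 1)) * Real.cos (x 2) * Real.sin (x 3),
      (chi k x * Real.cos (x 3)) / ((x 1) * Real.sin (x 2))],
    fun x => ![0, chi k x * Real.cos (x 2),
      -((chi k x / (x 1)) * Real.sin (x 2)), 0],
    fun x => ![0, 0, Real.sin (x 3), Real.cos (x 3) / Real.tan (x 2)],
    fun x => ![0, 0, -Real.cos (x 3), Real.sin (x 3) / Real.tan (x 2)],
    fun x => ![0, 0, 0, 1]]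

theorem pd_eq_of_hasFDerivAt {f : (Fin 4 → ℝ) → ℝ} {f' : (Fin 4 → ℝ) →L[ℝ] ℝ} {x : Fin 4 → ℝ}
    (hf : HasFDerivAt f f' x) (μ : Fin 4) : pd μ f x = f' (Pi.single μ 1) := by
  rw [pd, hf.fderiv]

theorem pd_const (c : ℝ) (x : Fin 4 → ℝ) (μ : Fin 4) : pd μ (fun _ => c) x = 0 := by
  simp [pd]

theorem pd_eq_prod_four {f : (Fin 4 → ℝ) → ℝ} {x : Fin 4 → ℝ} {f₀ f₁ f₂ f₃ : ℝ → ℝ}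
    {d₀ d₁ d₂ d₃ : ℝ} (hf : ∀ y, f y = f₀ (y 0) * f₁ (y 1) * f₂ (y 2) * f₃ (y 3))
    (h₀ : HasDerivAt f₀ d₀ (x 0)) (h₁ : HasDerivAt f₁ d₁ (x 1))
    (h₂ : HasDerivAt f₂ d₂ (x 2)) (h₃ : HasDerivAt f₃ d₃ (x 3)) (μ : Fin 4) :
    pd μ f x =
      ![d₀ * f₁ (x 1) * f₂ (x 2) * f₃ (x 3), f₀ (x 0) * d₁ * f₂ (x 2) * f₃ (x 3),
        f₀ (x 0) * f₁ (x 1) * d₂ * f₃ (x 3), f₀ (x 0) * f₁ (x 1) * f₂ (x 2) * d₃] μ := by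
  have hcoord {g : ℝ → ℝ} {d : ℝ} (i : Fin 4) (h : HasDerivAt g d (x i)) :
      HasFDerivAt (fun y : Fin 4 → ℝ => g (y i)) (d • ContinuousLinearMap.proj i) x :=
    h.comp_hasFDerivAt x (ContinuousLinearMap.proj (R := ℝ) (φ := fun _ : Fin 4 => ℝ) i).hasFDerivAt
  have H : HasFDerivAt (fun y => f₀ (y 0) * f₁ (y 1) * f₂ (y 2) * f₃ (y 3)) _ x :=
    (((hcoord 0 h₀).mul (hcoord 1 h₁)).mul (hcoord 2 h₂)).mul (hcoord 3 h₃)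
  rw [funext hf, pd_eq_of_hasFDerivAt H]
  fin_cases μ <;>
    simp only [Fin.isValue, Pi.mul_apply, smul_add, add_apply, smul_apply,
      ContinuousLinearMap.proj_apply, ne_eq, Fin.reduceEq, not_false_eq_true, Pi.single_eq_of_ne,
      smul_eq_mul, mul_zero, Pi.single_eq_same, mul_one, add_zero, zero_add, Fin.zero_eta,
      Fin.mk_one, Fin.reduceFinMk, Matrix.cons_val, Matrix.cons_val_zero, Matrix.cons_val_one] <;>
    ring

section OneVariable

variable {k r : ℝ}

theorem hasDerivAt_one_sub_mul_sq :
    HasDerivAt (fun r => 1 - k * r ^ 2) (-(2 * k * r)) r :=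
  (((hasDerivAt_pow 2 r).const_mul k).const_sub 1).congr_deriv (by ring)

theorem hasDerivAt_sqrt_one_sub_mul_sq (hk : 0 < 1 - k * r ^ 2) :
    HasDerivAt (fun r => √(1 - k * r ^ 2)) (-(k * r) / √(1 - k * r ^ 2)) r :=
  (hasDerivAt_one_sub_mul_sq.sqrt hk.ne').congr_deriv (by field_simp)

theorem hasDerivAt_sqrt_one_sub_mul_sq_div (hk : 0 < 1 - k * r ^ 2) (hr : r ≠ 0) :
    HasDerivAt (fun r => √(1 - k * r ^ 2) / r) (-1 / (r ^ 2 * √(1 - k * r ^ 2))) r := by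
  refine ((hasDerivAt_sqrt_one_sub_mul_sq hk).div (hasDerivAt_id' r) hr).congr_deriv ?_
  have hχ : 0 < √(1 - k * r ^ 2) := Real.sqrt_pos.mpr hk
  field_simp
  rw [Real.sq_sqrt hk.le]
  ring

theorem hasDerivAt_inv_one_sub_mul_sq (hk : 0 < 1 - k * r ^ 2) :
    HasDerivAt (fun r => (1 - k * r ^ 2)⁻¹) (2 * k * r / (1 - k * r ^ 2) ^ 2) r :=
  (hasDerivAt_one_sub_mul_sq.fun_inv hk.ne').congr_deriv (by ring)

end OneVariable

theorem hasDerivAt_cos_div_sin {θ : ℝ} (hs : sin θ ≠ 0) :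
    HasDerivAt (fun θ => cos θ / sin θ) (-1 / sin θ ^ 2) θ := by
  refine ((hasDerivAt_cos θ).div (hasDerivAt_sin θ) hs).congr_deriv ?_
  rw [← sin_sq_add_cos_sq θ]
  ring

theorem hasDerivAt_sq_of_differentiableAt {a : ℝ → ℝ} {t : ℝ} (ha : DifferentiableAt ℝ a t) :
    HasDerivAt (fun t => a t ^ 2) (2 * a t * deriv a t) t :=
  (ha.hasDerivAt.fun_pow 2).congr_deriv (by ring)

theorem killing_sum_diagonal {g : (Fin 4 → ℝ) → Matrix (Fin 4) (Fin 4) ℝ}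
    {d : (Fin 4 → ℝ) → Fin 4 → ℝ} (hg : ∀ y, g y = Matrix.diagonal (d y))
    (X : (Fin 4 → ℝ) → Fin 4 → ℝ) (x : Fin 4 → ℝ) (μ ν : Fin 4) :
    (∑ α, X x α * pd α (fun y => g y μ ν) x)
      + (∑ α, g x α ν * pd μ (fun y => X y α) x)
      + (∑ α, g x μ α * pd ν (fun y => X y α) x)
      = (if μ = ν then ∑ α, X x α * pd α (fun y => d y μ) x else 0)
        + d x ν * pd μ (fun y => X y ν) x + d x μ * pd ν (fun y => X y μ) x := by
  simp only [hg, Matrix.diagonal_apply]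
  split_ifs with h
  · subst h
    simp [Finset.sum_ite_eq, Finset.sum_ite_eq']
  · simp [Finset.sum_ite_eq, Finset.sum_ite_eq', pd_const]

section Jacobians

variable {k : ℝ} {x : Fin 4 → ℝ}

theorem chi_pos (hk : 0 < 1 - k * x 1 ^ 2) : 0 < chi k x := Real.sqrt_pos.mpr hk

theorem chi_sq (hk : 0 < 1 - k * x 1 ^ 2) : chi k x ^ 2 = 1 - k * x 1 ^ 2 := Real.sq_sqrt hk.le

theorem pd_gRW_diagonal {a : ℝ → ℝ} (ha : DifferentiableAt ℝ a (x 0)) (hk : 0 < 1 - k * x 1 ^ 2)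
    (μ α : Fin 4) :
    pd α (fun y => ![-1, a (y 0) ^ 2 / (1 - k * y 1 ^ 2), a (y 0) ^ 2 * y 1 ^ 2,
      a (y 0) ^ 2 * y 1 ^ 2 * sin (y 2) ^ 2] μ) x =
      !![0, 0, 0, 0;
        2 * a (x 0) * deriv a (x 0) / (1 - k * x 1 ^ 2),
          2 * k * x 1 * a (x 0) ^ 2 / (1 - k * x 1 ^ 2) ^ 2, 0, 0;
        2 * a (x 0) * deriv a (x 0) * x 1 ^ 2, 2 * a (x 0) ^ 2 * x 1, 0, 0;
        2 * a (x 0) * deriv a (x 0) * x 1 ^ 2 * sin (x 2) ^ 2,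
          2 * a (x 0) ^ 2 * x 1 * sin (x 2) ^ 2, 2 * a (x 0) ^ 2 * x 1 ^ 2 * sin (x 2) * cos (x 2),
          0] μ α := by
  refine match μ with
    | 0 => (pd_const _ x α).trans ?_
    | 1 => (pd_eq_prod_four (fun _ => by simp only [Matrix.cons_val]; ring)
        (hasDerivAt_sq_of_differentiableAt ha) (hasDerivAt_inv_one_sub_mul_sq hk)
        (hasDerivAt_const _ 1) (hasDerivAt_const _ 1) α).trans ?_
    | 2 => (pd_eq_prod_four (fun _ => by simp only [Matrix.cons_val]; ring)
        (hasDerivAt_sq_of_differentiableAt ha) (hasDerivAt_pow 2 _)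
        (hasDerivAt_const _ 1) (hasDerivAt_const _ 1) α).trans ?_
    | 3 => (pd_eq_prod_four (fun _ => by simp only [Matrix.cons_val]; ring)
        (hasDerivAt_sq_of_differentiableAt ha) (hasDerivAt_pow 2 _)
        ((hasDerivAt_sin _).fun_pow 2) (hasDerivAt_const _ 1) α).trans ?_
  all_goals fin_cases α <;>
    simp only [Fin.zero_eta, Fin.mk_one, Fin.reduceFinMk, Matrix.of_apply, Matrix.cons_val] <;>
    ring

theorem pd_KV_zero (hk : 0 < 1 - k * x 1 ^ 2) (hr : x 1 ≠ 0) (hs : sin (x 2) ≠ 0) (α μ : Fin 4) :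
    pd μ (fun y => KV k 0 y α) x =
      !![0, 0, 0, 0;
        0, -(k * x 1) / chi k x * sin (x 2) * cos (x 3), chi k x * cos (x 2) * cos (x 3),
          -(chi k x * sin (x 2) * sin (x 3));
        0, -(cos (x 2) * cos (x 3)) / (x 1 ^ 2 * chi k x), -(chi k x / x 1 * sin (x 2) * cos (x 3)),
          -(chi k x / x 1 * cos (x 2) * sin (x 3));
        0, sin (x 3) / (x 1 ^ 2 * chi k x * sin (x 2)),
          chi k x * cos (x 2) * sin (x 3) / (x 1 * sin (x 2) ^ 2),
          -(chi k x * cos (x 3) / (x 1 * sin (x 2)))] α μ := by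
  refine match α with
    | 0 => (pd_const _ x μ).trans ?_
    | 1 => (pd_eq_prod_four (fun _ => by simp only [KV, chi, Matrix.cons_val]; ring)
        (hasDerivAt_const _ 1) (hasDerivAt_sqrt_one_sub_mul_sq hk)
        (hasDerivAt_sin _) (hasDerivAt_cos _) μ).trans ?_
    | 2 => (pd_eq_prod_four (fun _ => by simp only [KV, chi, Matrix.cons_val]; ring)
        (hasDerivAt_const _ 1) (hasDerivAt_sqrt_one_sub_mul_sq_div hk hr)
        (hasDerivAt_cos _) (hasDerivAt_cos _) μ).trans ?_
    | 3 => (pd_eq_prod_four (fun _ => by simp only [KV, chi, Matrix.cons_val]; ring)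
        (hasDerivAt_const _ 1) (hasDerivAt_sqrt_one_sub_mul_sq_div hk hr).fun_neg
        ((hasDerivAt_sin _).fun_inv hs) (hasDerivAt_sin _) μ).trans ?_
  all_goals fin_cases μ <;>
    simp only [chi, Fin.zero_eta, Fin.mk_one, Fin.reduceFinMk, Matrix.of_apply, Matrix.cons_val] <;>
    ring

theorem pd_KV_one (hk : 0 < 1 - k * x 1 ^ 2) (hr : x 1 ≠ 0) (hs : sin (x 2) ≠ 0) (α μ : Fin 4) :
    pd μ (fun y => KV k 1 y α) x =
      !![0, 0, 0, 0;
        0, -(k * x 1) / chi k x * sin (x 2) * sin (x 3), chi k x * cos (x 2) * sin (x 3),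
          chi k x * sin (x 2) * cos (x 3);
        0, -(cos (x 2) * sin (x 3)) / (x 1 ^ 2 * chi k x), -(chi k x / x 1 * sin (x 2) * sin (x 3)),
          chi k x / x 1 * cos (x 2) * cos (x 3);
        0, -cos (x 3) / (x 1 ^ 2 * chi k x * sin (x 2)),
          -(chi k x * cos (x 2) * cos (x 3) / (x 1 * sin (x 2) ^ 2)),
          -(chi k x * sin (x 3) / (x 1 * sin (x 2)))] α μ := by
  refine match α with
    | 0 => (pd_const _ x μ).trans ?_
    | 1 => (pd_eq_prod_four (fun _ => by simp only [KV, chi, Matrix.cons_val]; ring)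
        (hasDerivAt_const _ 1) (hasDerivAt_sqrt_one_sub_mul_sq hk)
        (hasDerivAt_sin _) (hasDerivAt_sin _) μ).trans ?_
    | 2 => (pd_eq_prod_four (fun _ => by simp only [KV, chi, Matrix.cons_val]; ring)
        (hasDerivAt_const _ 1) (hasDerivAt_sqrt_one_sub_mul_sq_div hk hr)
        (hasDerivAt_cos _) (hasDerivAt_sin _) μ).trans ?_
    | 3 => (pd_eq_prod_four (fun _ => by simp only [KV, chi, Matrix.cons_val]; ring)
        (hasDerivAt_const _ 1) (hasDerivAt_sqrt_one_sub_mul_sq_div hk hr)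
        ((hasDerivAt_sin _).fun_inv hs) (hasDerivAt_cos _) μ).trans ?_
  all_goals fin_cases μ <;>
    simp only [chi, Fin.zero_eta, Fin.mk_one, Fin.reduceFinMk, Matrix.of_apply, Matrix.cons_val] <;>
    ring

theorem pd_KV_two (hk : 0 < 1 - k * x 1 ^ 2) (hr : x 1 ≠ 0) (α μ : Fin 4) :
    pd μ (fun y => KV k 2 y α) x =
      !![0, 0, 0, 0;
        0, -(k * x 1) / chi k x * cos (x 2), -(chi k x * sin (x 2)), 0;
        0, sin (x 2) / (x 1 ^ 2 * chi k x), -(chi k x / x 1 * cos (x 2)), 0;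
        0, 0, 0, 0] α μ := by
  refine match α with
    | 0 => (pd_const _ x μ).trans ?_
    | 1 => (pd_eq_prod_four (fun _ => by simp only [KV, chi, Matrix.cons_val]; ring)
        (hasDerivAt_const _ 1) (hasDerivAt_sqrt_one_sub_mul_sq hk)
        (hasDerivAt_cos _) (hasDerivAt_const _ 1) μ).trans ?_
    | 2 => (pd_eq_prod_four (fun _ => by simp only [KV, chi, Matrix.cons_val]; ring)
        (hasDerivAt_const _ 1) (hasDerivAt_sqrt_one_sub_mul_sq_div hk hr).fun_neg
        (hasDerivAt_sin _) (hasDerivAt_const _ 1) μ).trans ?_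
    | 3 => (pd_const _ x μ).trans ?_
  all_goals fin_cases μ <;>
    simp only [chi, Fin.zero_eta, Fin.mk_one, Fin.reduceFinMk, Matrix.of_apply, Matrix.cons_val] <;>
    ring

theorem pd_KV_three (hs : sin (x 2) ≠ 0) (α μ : Fin 4) :
    pd μ (fun y => KV k 3 y α) x =
      !![0, 0, 0, 0;
        0, 0, 0, 0;
        0, 0, 0, cos (x 3);
        0, 0, -(cos (x 3) / sin (x 2) ^ 2), -(cos (x 2) * sin (x 3) / sin (x 2))] α μ := by
  refine match α with
    | 0 => (pd_const _ x μ).trans ?_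
    | 1 => (pd_const _ x μ).trans ?_
    | 2 => (pd_eq_prod_four (fun _ => by
          simp only [KV, tan_eq_sin_div_cos, div_div_eq_mul_div, Matrix.cons_val]; ring)
        (hasDerivAt_const _ 1) (hasDerivAt_const _ 1)
        (hasDerivAt_const _ 1) (hasDerivAt_sin _) μ).trans ?_
    | 3 => (pd_eq_prod_four (fun _ => by
          simp only [KV, tan_eq_sin_div_cos, div_div_eq_mul_div, Matrix.cons_val]; ring)
        (hasDerivAt_const _ 1) (hasDerivAt_const _ 1)
        (hasDerivAt_cos_div_sin hs) (hasDerivAt_cos _) μ).trans ?_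
  all_goals fin_cases μ <;>
    simp only [Fin.zero_eta, Fin.mk_one, Fin.reduceFinMk, Matrix.of_apply, Matrix.cons_val] <;>
    ring

theorem pd_KV_four (hs : sin (x 2) ≠ 0) (α μ : Fin 4) :
    pd μ (fun y => KV k 4 y α) x =
      !![0, 0, 0, 0;
        0, 0, 0, 0;
        0, 0, 0, sin (x 3);
        0, 0, -(sin (x 3) / sin (x 2) ^ 2), cos (x 2) * cos (x 3) / sin (x 2)] α μ := by
  refine match α with
    | 0 => (pd_const _ x μ).trans ?_
    | 1 => (pd_const _ x μ).trans ?_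
    | 2 => (pd_eq_prod_four (fun _ => by
          simp only [KV, tan_eq_sin_div_cos, div_div_eq_mul_div, Matrix.cons_val]; ring)
        (hasDerivAt_const _ 1) (hasDerivAt_const _ 1)
        (hasDerivAt_const _ 1) (hasDerivAt_cos _).fun_neg μ).trans ?_
    | 3 => (pd_eq_prod_four (fun _ => by
          simp only [KV, tan_eq_sin_div_cos, div_div_eq_mul_div, Matrix.cons_val]; ring)
        (hasDerivAt_const _ 1) (hasDerivAt_const _ 1)
        (hasDerivAt_cos_div_sin hs) (hasDerivAt_sin _) μ).trans ?_
  all_goals fin_cases μ <;>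
    simp only [Fin.zero_eta, Fin.mk_one, Fin.reduceFinMk, Matrix.of_apply, Matrix.cons_val] <;>
    ring

theorem pd_KV_five (α μ : Fin 4) : pd μ (fun y => KV k 5 y α) x = 0 := by
  fin_cases α <;> exact pd_const _ x μ

end Jacobians

theorem killing_equation_RW_general (k : ℝ) (a : ℝ → ℝ)
    (ha : ContDiff ℝ ∞ a)
    (i : Fin 6) (x : Fin 4 → ℝ)
    (hr : 0 < x 1) (hθ₁ : 0 < x 2) (hθ₂ : x 2 < Real.pi)
    (hk : 0 < 1 - k * (x 1) ^ 2) (μ ν : Fin 4) :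
    (∑ α, KV k i x α * pd α (fun y => gRW k a y μ ν) x)
      + (∑ α, gRW k a x α ν * pd μ (fun y => KV k i y α) x)
      + (∑ α, gRW k a x μ α * pd ν (fun y => KV k i y α) x) = 0 := by
  have hs : sin (x 2) ≠ 0 := (sin_pos_of_pos_of_lt_pi hθ₁ hθ₂).ne'
  have hχ : 0 < chi k x := chi_pos hk
  have hk' : k = (1 - chi k x ^ 2) / x 1 ^ 2 := by
    rw [chi_sq hk]
    field_simp
    ring
  rw [killing_sum_diagonal (g := gRW k a) (fun _ => rfl)]
  fin_cases i <;>
    simp only [Fin.zero_eta, Fin.mk_one, Fin.reduceFinMk, Fin.sum_univ_four,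
      pd_gRW_diagonal (ha.differentiable (by simp) (x 0)) hk, pd_KV_zero hk hr.ne' hs,
      pd_KV_one hk hr.ne' hs, pd_KV_two hk hr.ne', pd_KV_three hs, pd_KV_four hs, pd_KV_five] <;>
    fin_cases μ <;> fin_cases ν <;>
    simp only [KV, Fin.zero_eta, Fin.mk_one, Fin.reduceFinMk, Fin.isValue, Fin.reduceEq,
      ↓reduceIte, one_ne_zero, zero_ne_one, Matrix.of_apply, Matrix.cons_val] <;>
    generalize chi k x = c at hχ hk' ⊢ <;> subst hk' <;> field_simp <;> ring_nf <;>
    -- only the (φ, φ) components for X₁ and X₂ are left; they need sin² θ + cos² θ = 1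
    rw [cos_sq'] <;> ring

/-- Each of the six vector fields satisfies the Killing equation
X^α ∂_α g_{μν} + g_{αν} ∂_μ X^α + g_{μα} ∂_ν X^α = 0 at every point of U. -/
theorem killing_equation_RW (k : ℝ) (a : ℝ → ℝ)
    (ha : ContDiff ℝ ∞ a) (hapos : ∀ t, 0 < a t)
    (i : Fin 6) (x : Fin 4 → ℝ)
    (hr : 0 < x 1) (hθ₁ : 0 < x 2) (hθ₂ : x 2 < Real.pi)
    (hk : 0 < 1 - k * (x 1) ^ 2) (μ ν : Fin 4) :
    (∑ α, KV k i x α * pd α (fun y => gRW k a y μ ν) x)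
      + (∑ α, gRW k a x α ν * pd μ (fun y => KV k i y α) x)
      + (∑ α, gRW k a x μ α * pd ν (fun y => KV k i y α) x) = 0 :=
  killing_equation_RW_general k a ha i x hr hθ₁ hθ₂ hk μ ν

end
end

section
/- (Energy conservation, k = −1 TRW.) Let δ = ±1, κ ≠ 0, let a : ℝ → ℝ be positive and twice differentiable, ρ, p : ℝ → ℝ differentiable, F : ℝ → ℝ twice differentiable, and set B(t) := ȧ/a + δ/a and T(t) := 6 B(t)². If for all t the field equations −F(T)/2 + 6 F'(T)(ȧ/a) B = κρ and F(T) − 6 F'(T)(ä/a + B²) − 6 F''(T) Ṫ B = κ(ρ + 3p) hold, then ρ̇ = −3(ȧ/a)(ρ + p) for all t. -/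
/-!
Differentiating the first field equation and eliminating the `F''(T) Ṫ` term with the second one
leaves a combination of `F'(T)` terms that vanishes identically, because with `H = ȧ/a` one has
`Ḣ = ä/a - H²` and, since `(δ/a)˙ = -H · δ/a`, also `Ḃ = ä/a - H B`.
-/

theorem hasDerivAt_deriv_div {a : ℝ → ℝ} {t : ℝ} (ha : DifferentiableAt ℝ a t)
    (ha' : DifferentiableAt ℝ (deriv a) t) (hat : a t ≠ 0) :
    HasDerivAt (fun s => deriv a s / a s)
      (deriv (deriv a) t / a t - (deriv a t / a t) ^ 2) t :=
  (ha'.hasDerivAt.div ha.hasDerivAt hat).congr_deriv (by field_simp)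

theorem hasDerivAt_deriv_div_add_const_div {a : ℝ → ℝ} {t : ℝ} (δ : ℝ)
    (ha : DifferentiableAt ℝ a t) (ha' : DifferentiableAt ℝ (deriv a) t) (hat : a t ≠ 0) :
    HasDerivAt (fun s => deriv a s / a s + δ / a s)
      (deriv (deriv a) t / a t - deriv a t / a t * (deriv a t / a t + δ / a t)) t :=
  ((hasDerivAt_deriv_div ha ha' hat).add ((hasDerivAt_const t δ).div ha.hasDerivAt hat)).congr_deriv
    (by field_simp; ring)

theorem hasDerivAt_teleparallel_energy {F H B T : ℝ → ℝ} {q t : ℝ}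
    (hF : DifferentiableAt ℝ F (T t)) (hF' : DifferentiableAt ℝ (deriv F) (T t))
    (hH : HasDerivAt H (q - H t ^ 2) t) (hB : HasDerivAt B (q - H t * B t) t)
    (hT : HasDerivAt T (12 * B t * (q - H t * B t)) t) :
    HasDerivAt (fun s => -F (T s) / 2 + 6 * deriv F (T s) * H s * B s)
      (-H t * (2 * (-F (T t) / 2 + 6 * deriv F (T t) * H t * B t)
        + (F (T t) - 6 * deriv F (T t) * (q + B t ^ 2)
          - 6 * deriv (deriv F) (T t) * (12 * B t * (q - H t * B t)) * B t))) t :=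
  (((hF.hasDerivAt.comp t hT).neg.div_const 2).add
    ((((hF'.hasDerivAt.comp t hT).const_mul 6).mul hH).mul hB)).congr_deriv
    (by simp only [Function.comp_apply, Pi.mul_apply]; ring)

theorem energy_conservation_k_neg_one_general
    (δ κ : ℝ) (hκ : κ ≠ 0)
    (a ρ p F : ℝ → ℝ)
    (hapos : ∀ t, 0 < a t)
    (ha : Differentiable ℝ a) (ha' : Differentiable ℝ (deriv a))
    (hF : Differentiable ℝ F) (hF' : Differentiable ℝ (deriv F))
    (B : ℝ → ℝ) (hB : ∀ t, B t = deriv a t / a t + δ / a t)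
    (T : ℝ → ℝ) (hT : ∀ t, T t = 6 * (B t) ^ 2)
    (feq1 : ∀ t, -(F (T t)) / 2
        + 6 * deriv F (T t) * (deriv a t / a t) * B t = κ * ρ t)
    (feq2 : ∀ t, F (T t)
        - 6 * deriv F (T t) * (deriv (deriv a) t / a t + (B t) ^ 2)
        - 6 * deriv (deriv F) (T t) * deriv T t * B t = κ * (ρ t + 3 * p t)) :
    ∀ t, deriv ρ t = -3 * (deriv a t / a t) * (ρ t + p t) := by
  intro t
  have hH := hasDerivAt_deriv_div (ha t) (ha' t) (hapos t).ne'
  have hB' : HasDerivAt B (deriv (deriv a) t / a t - deriv a t / a t * B t) t := by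
    rw [funext hB]
    exact hasDerivAt_deriv_div_add_const_div δ (ha t) (ha' t) (hapos t).ne'
  have hT' : HasDerivAt T (12 * B t * (deriv (deriv a) t / a t - deriv a t / a t * B t)) t := by
    rw [funext hT]
    exact ((hB'.pow 2).const_mul 6).congr_deriv (by push_cast; ring)
  have hE := hasDerivAt_teleparallel_energy (hF (T t)) (hF' (T t)) hH hB' hT'
  have hκρ : κ * deriv ρ t = deriv (fun s => κ * ρ s) t := (deriv_const_mul_field κ).symm
  rw [← funext feq1, hE.deriv] at hκρ
  have h2 := feq2 t
  rw [hT'.deriv] at h2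
  apply mul_left_cancel₀ hκ
  linear_combination hκρ - 2 * (deriv a t / a t) * feq1 t - (deriv a t / a t) * h2

theorem energy_conservation_k_neg_one
    (δ κ : ℝ) (hδ : δ = 1 ∨ δ = -1) (hκ : κ ≠ 0)
    (a ρ p F : ℝ → ℝ)
    (hapos : ∀ t, 0 < a t)
    (ha : Differentiable ℝ a) (ha' : Differentiable ℝ (deriv a))
    (hρ : Differentiable ℝ ρ) (hp : Differentiable ℝ p)
    (hF : Differentiable ℝ F) (hF' : Differentiable ℝ (deriv F))
    (B : ℝ → ℝ) (hB : ∀ t, B t = deriv a t / a t + δ / a t)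
    (T : ℝ → ℝ) (hT : ∀ t, T t = 6 * (B t) ^ 2)
    (feq1 : ∀ t, -(F (T t)) / 2
        + 6 * deriv F (T t) * (deriv a t / a t) * B t = κ * ρ t)
    (feq2 : ∀ t, F (T t)
        - 6 * deriv F (T t) * (deriv (deriv a) t / a t + (B t) ^ 2)
        - 6 * deriv (deriv F) (T t) * deriv T t * B t = κ * (ρ t + 3 * p t)) :
    ∀ t, deriv ρ t = -3 * (deriv a t / a t) * (ρ t + p t) :=
  energy_conservation_k_neg_one_general δ κ hκ a ρ p F hapos ha ha' hF hF' B hB T hT feq1 feq2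
end

section
/- (Energy conservation, k = +1 TRW.) Let k = 1, κ ≠ 0, let a : ℝ → ℝ be positive and twice differentiable, ρ, p : ℝ → ℝ differentiable, F : ℝ → ℝ twice differentiable, and set T(t) := 6((ȧ/a)² − k/a²). If for all t the field equations −F(T)/2 + 6 F'(T)(ȧ/a)² = κρ and F(T) − 6 F'(T)(ä/a + (ȧ/a)² − k/a²) − 6 F''(T) Ṫ (ȧ/a) = κ(ρ + 3p) hold, then ρ̇ = −3(ȧ/a)(ρ + p) for all t. -/
/-!
Differentiate the first field equation along the solution and eliminate `F(T)` and `ä`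
with the two field equations: since `Ṫ = 12 H (Ḣ + k/a²)` with `H = ȧ/a` and
`Ḣ = ä/a − H²`, the `F'(T)` and `F''(T)` terms of `κρ̇` match those of `−3Hκ(ρ + p)`.
-/

section Derivatives

variable {a : ℝ → ℝ} {t : ℝ}

theorem hasDerivAt_deriv_div_self (ha : DifferentiableAt ℝ a t)
    (ha' : DifferentiableAt ℝ (deriv a) t) (h0 : a t ≠ 0) :
    HasDerivAt (fun s => deriv a s / a s)
      (deriv (deriv a) t / a t - (deriv a t / a t) ^ 2) t := by
  refine (ha'.hasDerivAt.div ha.hasDerivAt h0).congr_deriv ?_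
  field_simp

theorem hasDerivAt_div_sq_self (k : ℝ) (ha : DifferentiableAt ℝ a t) (h0 : a t ≠ 0) :
    HasDerivAt (fun s => k / a s ^ 2) (-2 * (deriv a t / a t) * (k / a t ^ 2)) t := by
  refine ((hasDerivAt_const t k).div (ha.hasDerivAt.fun_pow 2) (pow_ne_zero 2 h0)).congr_deriv ?_
  field_simp
  ring

theorem hasDerivAt_torsionScalar (k : ℝ) (ha : DifferentiableAt ℝ a t)
    (ha' : DifferentiableAt ℝ (deriv a) t) (h0 : a t ≠ 0) :
    HasDerivAt (fun s => 6 * ((deriv a s / a s) ^ 2 - k / a s ^ 2))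
      (12 * (deriv a t / a t)
        * (deriv (deriv a) t / a t - (deriv a t / a t) ^ 2 + k / a t ^ 2)) t := by
  refine ((((hasDerivAt_deriv_div_self ha ha' h0).pow 2).sub
    (hasDerivAt_div_sq_self k ha h0)).const_mul 6).congr_deriv ?_
  push_cast
  ring

end Derivatives

theorem hasDerivAt_friedmann {F T H : ℝ → ℝ} {t T' H' : ℝ}
    (hF : DifferentiableAt ℝ F (T t)) (hF' : DifferentiableAt ℝ (deriv F) (T t))
    (hT : HasDerivAt T T' t) (hH : HasDerivAt H H' t) :
    HasDerivAt (fun s => -F (T s) / 2 + 6 * deriv F (T s) * H s ^ 2)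
      (deriv F (T t) * (12 * H t * H' - T' / 2)
        + 6 * deriv (deriv F) (T t) * T' * H t ^ 2) t := by
  have hFT := hF.hasDerivAt.comp t hT
  have hF'T := hF'.hasDerivAt.comp t hT
  refine ((hFT.neg.div_const 2).add ((hF'T.const_mul 6).mul (hH.fun_pow 2))).congr_deriv ?_
  dsimp only [Function.comp_apply]
  push_cast
  ring

theorem energy_conservation_k_pos_one_general
    (k κ : ℝ) (hκ : κ ≠ 0)
    (a ρ p F : ℝ → ℝ)
    (hapos : ∀ t, 0 < a t)
    (ha : Differentiable ℝ a) (ha' : Differentiable ℝ (deriv a))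
    (hF : Differentiable ℝ F) (hF' : Differentiable ℝ (deriv F))
    (T : ℝ → ℝ) (hT : ∀ t, T t = 6 * ((deriv a t / a t) ^ 2 - k / (a t) ^ 2))
    (feq1 : ∀ t, -(F (T t)) / 2
        + 6 * deriv F (T t) * (deriv a t / a t) ^ 2 = κ * ρ t)
    (feq2 : ∀ t, F (T t)
        - 6 * deriv F (T t)
            * (deriv (deriv a) t / a t + (deriv a t / a t) ^ 2 - k / (a t) ^ 2)
        - 6 * deriv (deriv F) (T t) * deriv T t * (deriv a t / a t)
          = κ * (ρ t + 3 * p t)) :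
    ∀ t, deriv ρ t = -3 * (deriv a t / a t) * (ρ t + p t) := by
  intro t
  have h0 := (hapos t).ne'
  have hH := hasDerivAt_deriv_div_self (ha t) (ha' t) h0
  have hTd : HasDerivAt T _ t :=
    funext hT ▸ hasDerivAt_torsionScalar k (ha t) (ha' t) h0
  have hκρ := (hasDerivAt_friedmann (hF (T t)) (hF' (T t)) hTd hH).deriv
  rw [funext feq1, deriv_const_mul_field] at hκρ
  have e2 := feq2 t
  rw [hTd.deriv] at e2
  apply mul_left_cancel₀ hκ
  rw [hκρ]
  linear_combination (-2 * (deriv a t / a t)) * feq1 t - (deriv a t / a t) * e2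

theorem energy_conservation_k_pos_one
    (k κ : ℝ) (hk : k = 1) (hκ : κ ≠ 0)
    (a ρ p F : ℝ → ℝ)
    (hapos : ∀ t, 0 < a t)
    (ha : Differentiable ℝ a) (ha' : Differentiable ℝ (deriv a))
    (hρ : Differentiable ℝ ρ) (hp : Differentiable ℝ p)
    (hF : Differentiable ℝ F) (hF' : Differentiable ℝ (deriv F))
    (T : ℝ → ℝ) (hT : ∀ t, T t = 6 * ((deriv a t / a t) ^ 2 - k / (a t) ^ 2))
    (feq1 : ∀ t, -(F (T t)) / 2
        + 6 * deriv F (T t) * (deriv a t / a t) ^ 2 = κ * ρ t)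
    (feq2 : ∀ t, F (T t)
        - 6 * deriv F (T t)
            * (deriv (deriv a) t / a t + (deriv a t / a t) ^ 2 - k / (a t) ^ 2)
        - 6 * deriv (deriv F) (T t) * deriv T t * (deriv a t / a t)
          = κ * (ρ t + 3 * p t)) :
    ∀ t, deriv ρ t = -3 * (deriv a t / a t) * (ρ t + p t) :=
  energy_conservation_k_pos_one_general k κ hκ a ρ p F hapos ha ha' hF hF' T hT feq1 feq2
end

section
/- (Teleparallel de Sitter reduction.) Let A₀ > 0 and H₀ ≠ 0, let a(t) = A₀ e^{H₀ t}, let F : ℝ → ℝ be twice differentiable, ρ, p : ℝ → ℝ, κ ≠ 0, and set T(t) := 6(ȧ/a)². If for all t the k = 0 field equations −F(T)/2 + 6 F'(T)(ȧ/a)² = κρ and F(T) − 6 F'(T)(ä/a + (ȧ/a)²) − 6 F''(T) Ṫ (ȧ/a) = κ(ρ + 3p) hold, then T(t) = 6 H₀² for all t, and κ ρ(t) = −F(6H₀²)/2 + 6 F'(6H₀²) H₀² and κ p(t) = −κ ρ(t) for all t; in particular ρ and p are constant and the effective equation of state is p/ρ = −1 whenever ρ ≠ 0. -/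
/-!
STATEMENT 12 (Teleparallel de Sitter reduction): with a(t) = A₀ e^{H₀ t} and
T = 6(ȧ/a)², the k = 0 field equations force T = 6H₀²,
κρ = −F(6H₀²)/2 + 6F'(6H₀²)H₀², κp = −κρ; in particular ρ and p are constant
and p/ρ = −1 whenever ρ ≠ 0.
-/

theorem teleparallel_de_Sitter_reduction
    (A₀ H₀ κ : ℝ) (hA₀ : 0 < A₀) (hH₀ : H₀ ≠ 0) (hκ : κ ≠ 0)
    (a ρ p F : ℝ → ℝ)
    (haeq : ∀ t, a t = A₀ * Real.exp (H₀ * t))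
    (hF : Differentiable ℝ F) (hF' : Differentiable ℝ (deriv F))
    (T : ℝ → ℝ) (hT : ∀ t, T t = 6 * (deriv a t / a t) ^ 2)
    (feq1 : ∀ t, -(F (T t)) / 2
        + 6 * deriv F (T t) * (deriv a t / a t) ^ 2 = κ * ρ t)
    (feq2 : ∀ t, F (T t)
        - 6 * deriv F (T t) * (deriv (deriv a) t / a t + (deriv a t / a t) ^ 2)
        - 6 * deriv (deriv F) (T t) * deriv T t * (deriv a t / a t)
          = κ * (ρ t + 3 * p t)) :
    (∀ t, T t = 6 * H₀ ^ 2) ∧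
    (∀ t, κ * ρ t = -(F (6 * H₀ ^ 2)) / 2 + 6 * deriv F (6 * H₀ ^ 2) * H₀ ^ 2) ∧
    (∀ t, κ * p t = -(κ * ρ t)) ∧
    (∀ t s, ρ t = ρ s) ∧ (∀ t s, p t = p s) ∧
    (∀ t, ρ t ≠ 0 → p t / ρ t = -1) := by
  have ha : a = fun t => A₀ * Real.exp (H₀ * t) := funext haeq
  have hane : ∀ t, a t ≠ 0 := by
    intro t; rw [haeq t]; positivity
  have hda : ∀ t, HasDerivAt a (H₀ * a t) t := by
    intro t
    rw [ha]
    simpa using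
      (((hasDerivAt_id t).const_mul H₀).exp.const_mul A₀).congr_deriv (by simp; ring)
  have hda' : deriv a = fun t => H₀ * a t := funext fun t => (hda t).deriv
  have hdda : ∀ t, deriv (deriv a) t = H₀ ^ 2 * a t := by
    intro t
    rw [hda']
    have : HasDerivAt (fun t => H₀ * a t) (H₀ * (H₀ * a t)) t :=
      (hda t).const_mul H₀
    rw [this.deriv]; ring
  have hratio : ∀ t, deriv a t / a t = H₀ := by
    intro t
    rw [hda', mul_div_assoc, div_self (hane t), mul_one]
  have hTc : ∀ t, T t = 6 * H₀ ^ 2 := by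
    intro t; rw [hT t, hratio t]
  have hdT : ∀ t, deriv T t = 0 := by
    intro t
    have : T = fun _ => 6 * H₀ ^ 2 := funext hTc
    rw [this, deriv_const]
  have hρ : ∀ t, κ * ρ t = -(F (6 * H₀ ^ 2)) / 2 + 6 * deriv F (6 * H₀ ^ 2) * H₀ ^ 2 := by
    intro t
    have := feq1 t
    rw [hTc t, hratio t] at this
    linarith
  have hp : ∀ t, κ * p t = -(κ * ρ t) := by
    intro t
    have h2 := feq2 t
    rw [hTc t, hratio t, hdT t, hdda t] at h2
    have h1 := hρ t
    have hdd : deriv (deriv a) t / a t = H₀ ^ 2 → True := fun _ => trivial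
    have h3 : H₀ ^ 2 * a t / a t = H₀ ^ 2 := by rw [mul_div_assoc, div_self (hane t), mul_one]
    rw [h3] at h2
    linarith
  refine ⟨hTc, hρ, hp, ?_, ?_, ?_⟩
  · intro t s
    have := (hρ t).trans (hρ s).symm
    exact mul_left_cancel₀ hκ this
  · intro t s
    have h : κ * p t = κ * p s := by
      rw [hp t, hp s, hρ t, hρ s]
    exact mul_left_cancel₀ hκ h
  · intro t ht
    have h : p t = -ρ t := by
      have := hp t
      have h2 : κ * p t = κ * (-ρ t) := by linarith
      exact mul_left_cancel₀ hκ h2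
    rw [h, neg_div, div_self ht]
end
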